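/- Let n ≥ 1 and let Q_n(8,4) be the Möbius octagonal-quadrilateral network: the simple graph on the 8n vertices u_1,…,u_{4n}, v_1,…,v_{4n} whose edges are u_i u_{i+1} and v_i v_{i+1} for 1 ≤ i ≤ 4n−1, u_i v_i for every i ≡ 0 or 1 (mod 4), and the two twisted edges u_1 v_{4n} and v_1 u_{4n}. Then the characteristic polynomial of the Laplacian matrix of Q_n(8,4) factors as the product of the characteristic polynomial of the Laplacian matrix of the cycle C_{4n} and the characteristic polynomial of the 4n×4n matrix L_S(n) (the symmetric matrix with diagonal entries 4 at positions j ≡ 0 or 1 (mod 4) and 2 at positions j ≡ 2 or 3 (mod 4), entries −1 on the sub- and super-diagonal, corner entries +1, all other entries 0). -/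

import Mathlib

/-- Underlying relation of the Möbius octagonal-quadrilateral network `Q_n(8,4)`:
`Sum.inl i` is the vertex `u_{i+1}`, `Sum.inr i` is the vertex `v_{i+1}`. -/
def mobiusRel (n : ℕ) : (Fin (4 * n) ⊕ Fin (4 * n)) → (Fin (4 * n) ⊕ Fin (4 * n)) → Prop
  | Sum.inl i, Sum.inl j => i.val + 1 = j.val
  | Sum.inr i, Sum.inr j => i.val + 1 = j.val
  | Sum.inl i, Sum.inr j =>
      (i = j ∧ ((i.val + 1) % 4 = 0 ∨ (i.val + 1) % 4 = 1)) ∨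
      (i.val = 0 ∧ j.val = 4 * n - 1) ∨ (i.val = 4 * n - 1 ∧ j.val = 0)
  | Sum.inr _, Sum.inl _ => False

instance (n : ℕ) : DecidableRel (mobiusRel n) := fun a b => by
  rcases a with i | i <;> rcases b with j | j <;> simp only [mobiusRel] <;> infer_instance

/-- The Möbius octagonal-quadrilateral network `Q_n(8,4)`. -/
def mobius (n : ℕ) : SimpleGraph (Fin (4 * n) ⊕ Fin (4 * n)) :=
  SimpleGraph.fromRel (mobiusRel n)

instance (n : ℕ) : DecidableRel (mobius n).Adj := fun a b =>
  decidable_of_iff (a ≠ b ∧ (mobiusRel n a b ∨ mobiusRel n b a)) Iff.rfl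

/-- The matrix `L_S(n)`: 4n×4n, diagonal entries 4 at (1-indexed) positions ≡ 0,1 (mod 4)
and 2 at positions ≡ 2,3 (mod 4), −1 on the sub/super-diagonal, +1 in the corners. -/
def LS (n : ℕ) : Matrix (Fin (4 * n)) (Fin (4 * n)) ℝ :=
  Matrix.of fun i j =>
    if i.val = j.val then
      (if (i.val + 1) % 4 = 0 ∨ (i.val + 1) % 4 = 1 then 4 else 2)
    else if i.val + 1 = j.val ∨ j.val + 1 = i.val then -1
    else if (i.val = 0 ∧ j.val = 4 * n - 1) ∨ (j.val = 0 ∧ i.val = 4 * n - 1) then 1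
    else 0

/-! The swap `u_i ↔ v_i` is an automorphism of `Q_n(8,4)`, so its Laplacian has the block form
`[[A, B], [B, A]]`, and conjugating by `[[1, 1], [0, 1]]` makes it block triangular with
diagonal blocks `A + B` and `A - B`. Folding the two copies of each vertex together, `A + B` is
the Laplacian of the cycle `C_{4n}`: every rung becomes a loop, which the Laplacian does not see,
and each twisted edge becomes the edge `u_1 u_{4n}`. The block `A - B` is `L_S(n)` by inspection. -/

namespace Matrix

theorem eq_fromBlocks_of_swap_invariant {m α : Type*} (M : Matrix (m ⊕ m) (m ⊕ m) α)
    (h : ∀ a b, M a.swap b.swap = M a b) :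
    M = fromBlocks M.toBlocks₁₁ M.toBlocks₁₂ M.toBlocks₁₂ M.toBlocks₁₁ := by
  ext (i | i) (j | j)
  · rfl
  · rfl
  · exact (h (.inr i) (.inl j)).symm
  · exact (h (.inr i) (.inr j)).symm

variable {m R : Type*} [Fintype m] [DecidableEq m] [CommRing R]

theorem det_fromBlocks_self (A B : Matrix m m R) :
    (fromBlocks A B B A).det = (A + B).det * (A - B).det := by
  have hconj : fromBlocks 1 1 0 1 * fromBlocks A B B A * fromBlocks 1 (-1) 0 1
      = fromBlocks (A + B) 0 B (A - B) := by
    simp only [fromBlocks_multiply, Matrix.one_mul, Matrix.mul_one, Matrix.zero_mul,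
      Matrix.mul_zero, Matrix.mul_neg, add_zero, zero_add]
    congr 1 <;> abel
  have hunit (X : Matrix m m R) : (fromBlocks 1 X 0 1).det = 1 := by simp
  calc (fromBlocks A B B A).det
      = (fromBlocks 1 1 0 1 * fromBlocks A B B A * fromBlocks 1 (-1) 0 1).det := by
        rw [det_mul, det_mul, hunit, hunit, one_mul, mul_one]
    _ = (A + B).det * (A - B).det := by rw [hconj, det_fromBlocks_zero₁₂]

theorem charpoly_fromBlocks_self (A B : Matrix m m R) :
    (fromBlocks A B B A).charpoly = (A + B).charpoly * (A - B).charpoly := by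
  have hadd : charmatrix (A + B) = charmatrix A + -B.map Polynomial.C := by
    simp only [charmatrix, map_add]
    abel
  have hsub : charmatrix (A - B) = charmatrix A - -B.map Polynomial.C := by
    simp only [charmatrix, map_sub]
    abel
  rw [charpoly, charmatrix_fromBlocks, det_fromBlocks_self, ← hadd, ← hsub, charpoly, charpoly]

end Matrix

namespace SimpleGraph

theorem lapMatrix_apply {V R : Type*} [Fintype V] [DecidableEq V] [AddGroupWithOne R]
    (G : SimpleGraph V) [DecidableRel G.Adj] (a b : V) :
    G.lapMatrix R a b = (if a = b then (G.degree a : R) else 0) - if G.Adj a b then 1 else 0 := by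
  simp [lapMatrix, degMatrix, Matrix.diagonal_apply]

theorem degree_swap {V : Type*} [Fintype V] (G : SimpleGraph (V ⊕ V)) [DecidableRel G.Adj]
    (hG : ∀ a b, G.Adj a.swap b.swap ↔ G.Adj a b) (a : V ⊕ V) :
    G.degree a.swap = G.degree a := by
  rw [← Nat.cast_id (G.degree _), ← Nat.cast_id (G.degree a), degree_eq_sum_if_adj,
    degree_eq_sum_if_adj, ← (Equiv.sumComm V V).sum_comp]
  simp only [Equiv.sumComm_apply, hG]

section SwapInvariant

variable {V R : Type*} [Fintype V] [DecidableEq V] (G : SimpleGraph (V ⊕ V)) [DecidableRel G.Adj]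

theorem lapMatrix_swap [AddGroupWithOne R] (hG : ∀ a b, G.Adj a.swap b.swap ↔ G.Adj a b)
    (a b : V ⊕ V) : G.lapMatrix R a.swap b.swap = G.lapMatrix R a b := by
  simp only [lapMatrix_apply, degree_swap G hG, hG, Sum.swap_leftInverse.injective.eq_iff]

theorem charpoly_lapMatrix_of_swap [CommRing R] (hG : ∀ a b, G.Adj a.swap b.swap ↔ G.Adj a b) :
    (G.lapMatrix R).charpoly =
      ((G.lapMatrix R).toBlocks₁₁ + (G.lapMatrix R).toBlocks₁₂).charpoly *
        ((G.lapMatrix R).toBlocks₁₁ - (G.lapMatrix R).toBlocks₁₂).charpoly := by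
  conv_lhs => rw [Matrix.eq_fromBlocks_of_swap_invariant _ (G.lapMatrix_swap hG)]
  exact Matrix.charpoly_fromBlocks_self _ _

end SwapInvariant

theorem cycleGraph_adj_iff_val {N : ℕ} (hN : 2 ≤ N) {u v : Fin N} :
    (cycleGraph N).Adj u v ↔ u.val + 1 = v.val ∨ v.val + 1 = u.val ∨
      (u.val = 0 ∧ v.val = N - 1) ∨ (v.val = 0 ∧ u.val = N - 1) := by
  have hu := u.isLt
  have hv := v.isLt
  rw [cycleGraph_adj']
  rcases lt_trichotomy u v with h | rfl | h
  · rw [Fin.coe_sub_iff_lt.2 h, Fin.sub_val_of_le h.le]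
    omega
  · rw [Fin.sub_val_of_le le_rfl]
    omega
  · rw [Fin.sub_val_of_le h.le, Fin.coe_sub_iff_lt.2 h]
    omega

theorem cycleGraph_degree_eq_two {N : ℕ} (hN : 3 ≤ N) (v : Fin N) :
    (cycleGraph N).degree v = 2 := by
  obtain ⟨m, rfl⟩ := Nat.exists_eq_add_of_le' hN
  exact cycleGraph_degree_three_le

end SimpleGraph

open SimpleGraph

section Mobius

variable {n : ℕ}

theorem mobius_adj_inl_inl (i j : Fin (4 * n)) :
    (mobius n).Adj (.inl i) (.inl j) ↔ i.val + 1 = j.val ∨ j.val + 1 = i.val := by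
  simp only [mobius, fromRel_adj, mobiusRel, ne_eq, Sum.inl.injEq, Fin.ext_iff]
  omega

theorem mobius_adj_inr_inr (i j : Fin (4 * n)) :
    (mobius n).Adj (.inr i) (.inr j) ↔ i.val + 1 = j.val ∨ j.val + 1 = i.val := by
  simp only [mobius, fromRel_adj, mobiusRel, ne_eq, Sum.inr.injEq, Fin.ext_iff]
  omega

theorem mobius_adj_inl_inr (i j : Fin (4 * n)) :
    (mobius n).Adj (.inl i) (.inr j) ↔
      (i.val = j.val ∧ ((i.val + 1) % 4 = 0 ∨ (i.val + 1) % 4 = 1)) ∨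
        (i.val = 0 ∧ j.val = 4 * n - 1) ∨ (i.val = 4 * n - 1 ∧ j.val = 0) := by
  simp only [mobius, fromRel_adj, mobiusRel, ne_eq, reduceCtorEq, not_false_eq_true, true_and,
    or_false, Fin.ext_iff]

theorem mobius_adj_inr_inl (i j : Fin (4 * n)) :
    (mobius n).Adj (.inr i) (.inl j) ↔
      (j.val = i.val ∧ ((j.val + 1) % 4 = 0 ∨ (j.val + 1) % 4 = 1)) ∨
        (j.val = 0 ∧ i.val = 4 * n - 1) ∨ (j.val = 4 * n - 1 ∧ i.val = 0) := by
  simp only [mobius, fromRel_adj, mobiusRel, ne_eq, reduceCtorEq, not_false_eq_true, true_and,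
    false_or, Fin.ext_iff]

theorem mobius_adj_swap (a b : Fin (4 * n) ⊕ Fin (4 * n)) :
    (mobius n).Adj a.swap b.swap ↔ (mobius n).Adj a b := by
  rcases a with i | i <;> rcases b with j | j <;>
    simp only [Sum.swap_inl, Sum.swap_inr, mobius_adj_inl_inl, mobius_adj_inr_inr,
      mobius_adj_inl_inr, mobius_adj_inr_inl] <;> omega

theorem mobius_degree_inl (i : Fin (4 * n)) :
    (mobius n).degree (.inl i) = if (i.val + 1) % 4 = 0 ∨ (i.val + 1) % 4 = 1 then 3 else 2 := by
  have hi := i.isLt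
  -- Each neighbour `u_j` or `v_j` of `u_i` is a neighbour `j` of `i` in `C_{4n}`,
  -- except the rung `v_i`.
  have hfold (j : Fin (4 * n)) :
      ((if (mobius n).Adj (.inl i) (.inl j) then 1 else 0) +
          if (mobius n).Adj (.inl i) (.inr j) then 1 else 0) =
        (if (cycleGraph (4 * n)).Adj i j then 1 else 0) +
          if i = j then (if (i.val + 1) % 4 = 0 ∨ (i.val + 1) % 4 = 1 then 1 else 0) else 0 := by
    have hj := j.isLt
    simp only [mobius_adj_inl_inl, mobius_adj_inl_inr,
      cycleGraph_adj_iff_val (by omega : 2 ≤ 4 * n), Fin.ext_iff]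
    split_ifs <;> omega
  calc (mobius n).degree (.inl i)
      = ∑ j, ((if (mobius n).Adj (.inl i) (.inl j) then 1 else 0) +
          if (mobius n).Adj (.inl i) (.inr j) then 1 else 0) := by
        rw [← Nat.cast_id ((mobius n).degree _), degree_eq_sum_if_adj, Fintype.sum_sum_type,
          Finset.sum_add_distrib]
    _ = (cycleGraph (4 * n)).degree i +
          if (i.val + 1) % 4 = 0 ∨ (i.val + 1) % 4 = 1 then 1 else 0 := by
        rw [Finset.sum_congr rfl fun j _ => hfold j, Finset.sum_add_distrib, Finset.sum_ite_eq,
          if_pos (Finset.mem_univ _), ← Nat.cast_id ((cycleGraph _).degree _),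
          degree_eq_sum_if_adj]
    _ = _ := by
        rw [cycleGraph_degree_eq_two (by omega)]
        split_ifs <;> rfl

theorem mobius_lapMatrix_toBlocks_add :
    ((mobius n).lapMatrix ℝ).toBlocks₁₁ + ((mobius n).lapMatrix ℝ).toBlocks₁₂ =
      (cycleGraph (4 * n)).lapMatrix ℝ := by
  ext i j
  have hi := i.isLt
  have hj := j.isLt
  simp only [Matrix.add_apply, Matrix.toBlocks₁₁, Matrix.toBlocks₁₂, Matrix.of_apply,
    lapMatrix_apply, mobius_degree_inl, cycleGraph_degree_eq_two (by omega : 3 ≤ 4 * n),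
    mobius_adj_inl_inl, mobius_adj_inl_inr, cycleGraph_adj_iff_val (by omega : 2 ≤ 4 * n),
    Sum.inl.injEq, reduceCtorEq, Fin.ext_iff]
  split_ifs <;> norm_num <;> omega

theorem mobius_lapMatrix_toBlocks_sub :
    ((mobius n).lapMatrix ℝ).toBlocks₁₁ - ((mobius n).lapMatrix ℝ).toBlocks₁₂ =
      LS n := by
  ext i j
  have hi := i.isLt
  have hj := j.isLt
  simp only [Matrix.sub_apply, Matrix.toBlocks₁₁, Matrix.toBlocks₁₂, Matrix.of_apply, LS,
    lapMatrix_apply, mobius_degree_inl, mobius_adj_inl_inl, mobius_adj_inl_inr,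
    Sum.inl.injEq, reduceCtorEq, Fin.ext_iff]
  split_ifs <;> norm_num <;> omega

end Mobius

theorem stmt_10_general (n : ℕ) :
    ((mobius n).lapMatrix ℝ).charpoly
      = ((SimpleGraph.cycleGraph (4 * n)).lapMatrix ℝ).charpoly * (LS n).charpoly := by
  rw [charpoly_lapMatrix_of_swap _ mobius_adj_swap, mobius_lapMatrix_toBlocks_add,
    mobius_lapMatrix_toBlocks_sub]

theorem stmt_10 (n : ℕ) (hn : 1 ≤ n) :
    ((mobius n).lapMatrix ℝ).charpoly
      = ((SimpleGraph.cycleGraph (4 * n)).lapMatrix ℝ).charpoly * (LS n).charpoly :=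
  stmt_10_general n
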